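/- arXiv:2302.09704 — 2 statements merged into one kernel-verified Lean document; each statement's English description precedes it below -/
import Mathlib

section
/- Certificate with hull geometry: let A = conv(∪_{i∈[m]} A⁽ⁱ⁾) and B = conv(∪_{j∈[k]} B⁽ʲ⁾) with each A⁽ⁱ⁾, B⁽ʲ⁾ nonempty compact convex, let R, S be linear isometries and p, d ∈ ℝⁿ. Then sd(R·A + p, S·B + d) ≥ γ if and only if there exist c ∈ ℝⁿ with ‖c‖=1 and α, β ∈ ℝ such that α ≤ μ_{A⁽ⁱ⁾}(Rᵀc) for all i, β ≥ σ_{B⁽ʲ⁾}(Sᵀc) for all j, and γ ≤ α − β + ⟪c, p − d⟫. -/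
/-!
Everything reduces to a duality for compact convex `X`, `Y` with `K = X - Y`:
`γ ≤ sd X Y` iff `γ ≤ μ_K c = μ_X c - σ_Y c` for some unit vector `c`.
If `0 ∉ K`, the point `v` of least norm in `K` satisfies `‖v‖² ≤ ⟪v, w⟫` on `K` (Hilbert
projection), so `c = v / ‖v‖` attains `μ_K c = dist(0, K)`. If `0 ∈ K`, `sd X Y` is minus the
distance from `0` to the complement of `K`; each `t ∉ K` is separated from `K` in the same way,
giving a unit `c'` with `-‖t‖ ≤ μ_K c'`, so a maximiser of the continuous `μ_K` on the unit sphere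
is a certificate; conversely `(μ_K c - ε) • c ∉ K`.
The hull of the pieces has cost `min_i μ_{A i}` and support `max_j σ_{B j}` because half-spaces
are convex, it is compact by Carathéodory, and `x ↦ R x + p` turns `μ c` into `μ (R⁻¹ c) + ⟪c, p⟫`.
-/

open scoped RealInnerProductSpace Pointwise

noncomputable def costFn {n : ℕ} (C : Set (EuclideanSpace ℝ (Fin n)))
    (c : EuclideanSpace ℝ (Fin n)) : ℝ :=
  sInf ((fun x => ⟪c, x⟫) '' C)

noncomputable def suppFn {n : ℕ} (T : Set (EuclideanSpace ℝ (Fin n)))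
    (c : EuclideanSpace ℝ (Fin n)) : ℝ :=
  sSup ((fun x => ⟪c, x⟫) '' T)

open Classical in
noncomputable def sd {n : ℕ} (C D : Set (EuclideanSpace ℝ (Fin n))) : ℝ :=
  if Disjoint C D then sInf {r | ∃ x ∈ C, ∃ y ∈ D, r = ‖x - y‖}
  else - sInf {r | ∃ t : EuclideanSpace ℝ (Fin n), ‖t‖ = r ∧ Disjoint ((· + t) '' C) D}

theorem IsCompact.convexHull {F : Type*} [AddCommGroup F] [Module ℝ F] [TopologicalSpace F]
    [IsTopologicalAddGroup F] [ContinuousSMul ℝ F] [FiniteDimensional ℝ F] {s : Set F}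
    (hs : IsCompact s) : IsCompact (convexHull ℝ s) := by
  set N := Module.finrank ℝ F + 1
  -- Carathéodory: every point of the hull is a convex combination of `N` points of `s`.
  suffices h : _root_.convexHull ℝ s = (fun q : (Fin N → ℝ) × (Fin N → F) => ∑ i, q.1 i • q.2 i) ''
      (stdSimplex ℝ (Fin N) ×ˢ Set.univ.pi fun _ => s) by
    rw [h]
    exact ((isCompact_stdSimplex ℝ _).prod (isCompact_univ_pi fun _ => hs)).image (by fun_prop)
  refine subset_antisymm (fun x hx => ?_) ?_
  · obtain ⟨ι, _, z, w, hzs, hz, hw0, hw1, rfl⟩ := eq_pos_convex_span_of_mem_convexHull hx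
    have hcard : Fintype.card ι ≤ N :=
      hz.card_le_finrank_succ.trans (Nat.succ_le_succ (Submodule.finrank_le _))
    obtain ⟨e⟩ := Function.Embedding.nonempty_of_card_le (hcard.trans_eq (Fintype.card_fin N).symm)
    obtain ⟨i₀⟩ : Nonempty ι := by
      by_contra h
      simp [not_nonempty_iff.1 h] at hw1
    have hext : ∀ j ∉ Set.range e, Function.extend e w 0 j = 0 := fun j hj =>
      Function.extend_apply' _ _ _ (by simpa using hj)
    refine ⟨(Function.extend e w 0, Function.extend e z fun _ => z i₀), ⟨⟨fun j => ?_, ?_⟩, ?_⟩, ?_⟩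
    · by_cases hj : j ∈ Set.range e
      · obtain ⟨i, rfl⟩ := hj
        simpa [e.injective.extend_apply] using (hw0 i).le
      · simp [hext j hj]
    · rw [← hw1]
      exact (Fintype.sum_of_injective e e.injective _ _ hext fun i => by
        simp [e.injective.extend_apply]).symm
    · intro j _
      by_cases hj : j ∈ Set.range e
      · obtain ⟨i, rfl⟩ := hj
        simpa [e.injective.extend_apply] using hzs ⟨i, rfl⟩
      · simpa [Function.extend_apply' _ _ _ (by simpa using hj)] using hzs ⟨i₀, rfl⟩
    · exact (Fintype.sum_of_injective e e.injective _ _ (fun j hj => by simp [hext j hj])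
        fun i => by simp [e.injective.extend_apply]).symm
  · rintro _ ⟨⟨w, z⟩, ⟨hw, hz⟩, rfl⟩
    exact (convex_convexHull ℝ s).sum_mem (fun i _ => hw.1 i) hw.2
      fun i _ => subset_convexHull ℝ s (hz i trivial)

theorem exists_mem_forall_norm_sq_le_inner {F : Type*} [NormedAddCommGroup F]
    [InnerProductSpace ℝ F] {K : Set F} (hne : K.Nonempty) (hKc : IsComplete K)
    (hKv : Convex ℝ K) : ∃ v ∈ K, ∀ w ∈ K, ‖v‖ ^ 2 ≤ ⟪v, w⟫ := by
  obtain ⟨v, hv, hmin⟩ := exists_norm_eq_iInf_of_complete_convex hne hKc hKv 0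
  refine ⟨v, hv, fun w hw => ?_⟩
  have h := (norm_eq_iInf_iff_real_inner_le_zero hKv hv).1 hmin w hw
  rw [zero_sub, inner_neg_left, inner_sub_right, real_inner_self_eq_norm_sq] at h
  linarith

theorem Convex.image_linearMap_add_const {𝕜 F G : Type*} [Semiring 𝕜] [PartialOrder 𝕜]
    [AddCommGroup F] [Module 𝕜 F] [AddCommGroup G] [Module 𝕜 G] {C : Set F} (hC : Convex 𝕜 C)
    (f : F →ₗ[𝕜] G) (p : G) : Convex 𝕜 ((fun x => f x + p) '' C) := by
  simpa only [Set.image_image, add_comm p] using (hC.linear_image f).translate p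

theorem disjoint_image_add_const_iff_neg_notMem_sub {G : Type*} [AddCommGroup G] (C D : Set G)
    (t : G) : Disjoint ((· + t) '' C) D ↔ -t ∉ C - D := by
  rw [Set.mem_sub, Set.disjoint_left]
  simp only [Set.mem_image, not_exists, not_and, forall_exists_index, and_imp,
    forall_apply_eq_imp_iff₂]
  refine forall₂_congr fun x hx => ⟨fun h y hy hxy => h ?_, fun h hxt => h _ hxt ?_⟩
  · rwa [show x + t = y by rw [← neg_sub, neg_inj] at hxy; rw [← hxy]; abel]
  · abel

section

variable {n : ℕ}

local notation "E" => EuclideanSpace ℝ (Fin n)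

theorem le_costFn_iff {C : Set E} (hne : C.Nonempty) (hC : IsCompact C) {c : E} {a : ℝ} :
    a ≤ costFn C c ↔ ∀ x ∈ C, a ≤ ⟪c, x⟫ := by
  rw [costFn, le_csInf_iff (hC.image (by fun_prop)).bddBelow (hne.image _),
    Set.forall_mem_image]

theorem costFn_le {C : Set E} (hC : IsCompact C) {c x : E} (hx : x ∈ C) :
    costFn C c ≤ ⟪c, x⟫ :=
  (le_costFn_iff ⟨x, hx⟩ hC).1 le_rfl x hx

theorem continuous_costFn {C : Set E} (hC : IsCompact C) : Continuous (costFn C) :=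
  hC.continuous_sInf (f := fun c x => ⟪c, x⟫) continuous_inner

theorem suppFn_eq_neg_costFn_neg (T : Set E) (c : E) : suppFn T c = -costFn T (-c) := by
  have h : (fun x => ⟪-c, x⟫) '' T = -((fun x => ⟪c, x⟫) '' T) := by
    rw [← Set.image_neg_eq_neg, Set.image_image]
    simp only [inner_neg_left]
  rw [costFn, suppFn, h, Real.sInf_neg, neg_neg]

theorem costFn_sub {X Y : Set E} (hXne : X.Nonempty) (hYne : Y.Nonempty) (hX : IsCompact X)
    (hY : IsCompact Y) (c : E) : costFn (X - Y) c = costFn X c - suppFn Y c := by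
  have hXY : IsCompact (X - Y) := by rw [sub_eq_add_neg]; exact hX.add hY.neg
  rw [suppFn_eq_neg_costFn_neg, sub_neg_eq_add]
  refine le_antisymm ?_ ?_
  · rw [← sub_le_iff_le_add', le_costFn_iff hYne hY]
    intro y hy
    rw [sub_le_iff_le_add, ← sub_le_iff_le_add', le_costFn_iff hXne hX]
    intro x hx
    have := costFn_le hXY (c := c) (Set.sub_mem_sub hx hy)
    rw [inner_sub_right] at this
    rw [inner_neg_left]
    linarith
  · rw [le_costFn_iff (hXne.sub hYne) hXY]
    rintro _ ⟨x, hx, y, hy, rfl⟩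
    have := costFn_le hX (c := c) hx
    have := costFn_le hY (c := -c) hy
    rw [inner_neg_left] at this
    rw [inner_sub_right]
    linarith

theorem costFn_image_isometry_add (R : E ≃ₗᵢ[ℝ] E) (p : E) {C : Set E} (hne : C.Nonempty)
    (hC : IsCompact C) (c : E) :
    costFn ((fun x => R x + p) '' C) c = costFn C (R.symm c) + ⟪c, p⟫ := by
  have hinner : ∀ x, ⟪c, R x + p⟫ = ⟪R.symm c, x⟫ + ⟪c, p⟫ := fun x => by
    rw [inner_add_right, R.symm.inner_map_eq_flip, R.symm_symm]
  have hRC : IsCompact ((fun x => R x + p) '' C) := hC.image (by fun_prop)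
  refine le_antisymm ?_ ?_
  · rw [← sub_le_iff_le_add, le_costFn_iff hne hC]
    intro x hx
    linarith [costFn_le hRC (c := c) (Set.mem_image_of_mem _ hx), hinner x]
  · rw [le_costFn_iff (hne.image _) hRC]
    rintro _ ⟨x, hx, rfl⟩
    linarith [costFn_le hC (c := R.symm c) hx, hinner x]

theorem suppFn_image_isometry_add (R : E ≃ₗᵢ[ℝ] E) (p : E) {C : Set E} (hne : C.Nonempty)
    (hC : IsCompact C) (c : E) :
    suppFn ((fun x => R x + p) '' C) c = suppFn C (R.symm c) + ⟪c, p⟫ := by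
  rw [suppFn_eq_neg_costFn_neg, suppFn_eq_neg_costFn_neg, costFn_image_isometry_add R p hne hC,
    map_neg, inner_neg_left]
  ring

theorem le_costFn_convexHull_iUnion_iff {ι : Type*} [Finite ι] [Nonempty ι] {A : ι → Set E}
    (hA : ∀ i, (A i).Nonempty) (hAc : ∀ i, IsCompact (A i)) {c : E} {a : ℝ} :
    a ≤ costFn (convexHull ℝ (⋃ i, A i)) c ↔ ∀ i, a ≤ costFn (A i) c := by
  have hne : (convexHull ℝ (⋃ i, A i)).Nonempty :=
    (Set.nonempty_iUnion.2 ⟨Classical.arbitrary ι, hA _⟩).convexHull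
  have hH : Convex ℝ {x : E | a ≤ ⟪c, x⟫} :=
    convex_halfSpace_ge ⟨inner_add_right c, fun r x => real_inner_smul_right c x r⟩ a
  simp_rw [le_costFn_iff hne (isCompact_iUnion hAc).convexHull, le_costFn_iff (hA _) (hAc _)]
  exact (hH.convexHull_subset_iff.trans Set.iUnion_subset_iff :)

theorem suppFn_convexHull_iUnion_le_iff {ι : Type*} [Finite ι] [Nonempty ι] {A : ι → Set E}
    (hA : ∀ i, (A i).Nonempty) (hAc : ∀ i, IsCompact (A i)) {c : E} {b : ℝ} :
    suppFn (convexHull ℝ (⋃ i, A i)) c ≤ b ↔ ∀ i, suppFn (A i) c ≤ b := by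
  simp_rw [suppFn_eq_neg_costFn_neg, neg_le, le_costFn_convexHull_iUnion_iff hA hAc]

theorem sd_eq_sInf_norm_sub {C D : Set E} (h : Disjoint C D) :
    sd C D = sInf (norm '' (C - D)) := by
  rw [sd, if_pos h]
  congr 1
  ext r
  simp only [Set.mem_ofPred_eq, Set.mem_image, Set.mem_sub]
  aesop

theorem sd_eq_neg_sInf_norm_compl_sub {C D : Set E} (h : ¬Disjoint C D) :
    sd C D = -sInf (norm '' (C - D)ᶜ) := by
  rw [sd, if_neg h]
  congr 2
  ext r
  constructor
  · rintro ⟨t, rfl, ht⟩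
    exact ⟨-t, (disjoint_image_add_const_iff_neg_notMem_sub C D t).1 ht, norm_neg t⟩
  · rintro ⟨t, ht, rfl⟩
    exact ⟨-t, norm_neg t,
      (disjoint_image_add_const_iff_neg_notMem_sub C D (-t)).2 (by rwa [neg_neg])⟩

theorem exists_norm_eq_one_inner_add_norm_sub_le_costFn {K : Set E} (hne : K.Nonempty)
    (hK : IsCompact K) (hKv : Convex ℝ K) {t : E} (ht : t ∉ K) :
    ∃ c : E, ‖c‖ = 1 ∧ ∃ w ∈ K, ⟪c, t⟫ + ‖w - t‖ ≤ costFn K c := by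
  obtain ⟨_, ⟨w, hw, rfl⟩, hmin⟩ := exists_mem_forall_norm_sq_le_inner (hne.image (-t + ·))
    (hK.image (by fun_prop)).isComplete (hKv.translate (-t))
  have hv : w - t ≠ 0 := sub_ne_zero.2 fun h => ht (h ▸ hw)
  refine ⟨‖w - t‖⁻¹ • (w - t), norm_smul_inv_norm hv, w, hw, ?_⟩
  rw [le_costFn_iff hne hK]
  intro x hx
  have hx' := hmin _ ⟨x, hx, rfl⟩
  simp only [neg_add_eq_sub] at hx'
  calc ⟪‖w - t‖⁻¹ • (w - t), t⟫ + ‖w - t‖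
      = ⟪‖w - t‖⁻¹ • (w - t), t⟫ + ‖w - t‖⁻¹ * ‖w - t‖ ^ 2 := by
        field_simp
    _ ≤ ⟪‖w - t‖⁻¹ • (w - t), t⟫ + ‖w - t‖⁻¹ * ⟪w - t, x - t⟫ := by gcongr
    _ = ⟪‖w - t‖⁻¹ • (w - t), x⟫ := by
        rw [real_inner_smul_left, real_inner_smul_left, inner_sub_right]
        ring

theorem le_sInf_norm_iff {K : Set E} (hne : K.Nonempty) (hK : IsCompact K) (hKv : Convex ℝ K)
    (h0 : (0 : E) ∉ K) {γ : ℝ} :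
    γ ≤ sInf (norm '' K) ↔ ∃ c : E, ‖c‖ = 1 ∧ γ ≤ costFn K c := by
  constructor
  · intro hγ
    obtain ⟨c, hc, w, hw, hsep⟩ := exists_norm_eq_one_inner_add_norm_sub_le_costFn hne hK hKv h0
    refine ⟨c, hc, ?_⟩
    have hbdd : BddBelow (norm '' K) := ⟨0, by rintro _ ⟨x, -, rfl⟩; exact norm_nonneg x⟩
    simp only [inner_zero_right, sub_zero, zero_add] at hsep
    linarith [csInf_le hbdd (Set.mem_image_of_mem norm hw)]
  · rintro ⟨c, hc, hγ⟩
    refine le_csInf (hne.image _) ?_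
    rintro _ ⟨x, hx, rfl⟩
    have := real_inner_le_norm c x
    rw [hc, one_mul] at this
    linarith [costFn_le hK (c := c) hx]

theorem le_neg_sInf_norm_compl_iff (hn : 0 < n) {K : Set E} (hK : IsCompact K)
    (hKv : Convex ℝ K) (h0 : (0 : E) ∈ K) {γ : ℝ} :
    γ ≤ -sInf (norm '' Kᶜ) ↔ ∃ c : E, ‖c‖ = 1 ∧ γ ≤ costFn K c := by
  have hbdd : BddBelow (norm '' Kᶜ) := ⟨0, by rintro _ ⟨x, -, rfl⟩; exact norm_nonneg x⟩
  constructor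
  · intro hγ
    have : Nonempty (Fin n) := ⟨⟨0, hn⟩⟩
    obtain ⟨c, hc, hmax⟩ := (isCompact_sphere (0 : E) 1).exists_isMaxOn
      (NormedSpace.sphere_nonempty.2 zero_le_one) (continuous_costFn hK).continuousOn
    rw [mem_sphere_zero_iff_norm] at hc
    refine ⟨c, hc, ?_⟩
    suffices -costFn K c ≤ sInf (norm '' Kᶜ) by linarith
    refine le_csInf ((Set.nonempty_compl.2 hK.ne_univ).image _) ?_
    rintro _ ⟨t, ht, rfl⟩
    obtain ⟨c', hc', w, hw, hsep⟩ :=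
      exists_norm_eq_one_inner_add_norm_sub_le_costFn ⟨0, h0⟩ hK hKv ht
    have h1 : costFn K c' ≤ costFn K c := hmax (mem_sphere_zero_iff_norm.2 hc')
    have h2 := abs_real_inner_le_norm c' t
    rw [hc', one_mul] at h2
    linarith [neg_abs_le ⟪c', t⟫, norm_nonneg (w - t)]
  · rintro ⟨c, hc, hγ⟩
    have hle0 : costFn K c ≤ 0 := by simpa using costFn_le hK (c := c) h0
    refine le_neg_of_le_neg (le_of_forall_pos_le_add fun ε hε => ?_)
    have hcc : ⟪c, c⟫ = 1 := by rw [real_inner_self_eq_norm_sq, hc, one_pow]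
    have hout : (costFn K c - ε) • c ∉ K := fun hmem => by
      have := costFn_le hK (c := c) hmem
      rw [real_inner_smul_right, hcc] at this
      linarith
    calc sInf (norm '' Kᶜ) ≤ ‖(costFn K c - ε) • c‖ := csInf_le hbdd ⟨_, hout, rfl⟩
      _ = ε - costFn K c := by
        rw [norm_smul, hc, mul_one, Real.norm_of_nonpos (by linarith), neg_sub]
      _ ≤ -γ + ε := by linarith

theorem le_sd_iff (hn : 0 < n) {X Y : Set E} (hXne : X.Nonempty) (hYne : Y.Nonempty)
    (hX : IsCompact X) (hY : IsCompact Y) (hXv : Convex ℝ X) (hYv : Convex ℝ Y) {γ : ℝ} :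
    γ ≤ sd X Y ↔ ∃ c : E, ‖c‖ = 1 ∧ γ ≤ costFn X c - suppFn Y c := by
  have hXY : IsCompact (X - Y) := by rw [sub_eq_add_neg]; exact hX.add hY.neg
  simp_rw [← costFn_sub hXne hYne hX hY]
  by_cases h : Disjoint X Y
  · rw [sd_eq_sInf_norm_sub h]
    exact le_sInf_norm_iff (hXne.sub hYne) hXY (hXv.sub hYv) (Set.zero_notMem_sub_iff.2 h)
  · rw [sd_eq_neg_sInf_norm_compl_sub h]
    exact le_neg_sInf_norm_compl_iff hn hXY (hXv.sub hYv) (Set.zero_mem_sub_iff.2 h)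

end

theorem sd_ge_iff_hull_certificate_general {n m k : ℕ} (hn : 0 < n) (hm : 0 < m) (hk : 0 < k)
    (A : Fin m → Set (EuclideanSpace ℝ (Fin n))) (B : Fin k → Set (EuclideanSpace ℝ (Fin n)))
    (hA : ∀ i, (A i).Nonempty) (hAc : ∀ i, IsCompact (A i))
    (hB : ∀ j, (B j).Nonempty) (hBc : ∀ j, IsCompact (B j))
    (R S : EuclideanSpace ℝ (Fin n) ≃ₗᵢ[ℝ] EuclideanSpace ℝ (Fin n)) (p d : EuclideanSpace ℝ (Fin n)) (γ : ℝ) :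
    sd ((fun x => R x + p) '' convexHull ℝ (⋃ i, A i))
       ((fun x => S x + d) '' convexHull ℝ (⋃ j, B j)) ≥ γ ↔
      ∃ (c : EuclideanSpace ℝ (Fin n)) (α β : ℝ), ‖c‖ = 1 ∧
        (∀ i, α ≤ costFn (A i) (R.symm c)) ∧
        (∀ j, β ≥ suppFn (B j) (S.symm c)) ∧
        γ ≤ α - β + ⟪c, p - d⟫ := by
  have : Nonempty (Fin m) := ⟨⟨0, hm⟩⟩
  have : Nonempty (Fin k) := ⟨⟨0, hk⟩⟩
  have hAne := (Set.nonempty_iUnion.2 ⟨⟨0, hm⟩, hA _⟩).convexHull (𝕜 := ℝ)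
  have hBne := (Set.nonempty_iUnion.2 ⟨⟨0, hk⟩, hB _⟩).convexHull (𝕜 := ℝ)
  have hAcpt := (isCompact_iUnion hAc).convexHull
  have hBcpt := (isCompact_iUnion hBc).convexHull
  have hAv : Convex ℝ ((fun x => R x + p) '' convexHull ℝ (⋃ i, A i)) :=
    (convex_convexHull ℝ _).image_linearMap_add_const R.toLinearMap p
  have hBv : Convex ℝ ((fun x => S x + d) '' convexHull ℝ (⋃ j, B j)) :=
    (convex_convexHull ℝ _).image_linearMap_add_const S.toLinearMap d
  rw [ge_iff_le, le_sd_iff hn (hAne.image _) (hBne.image _) (hAcpt.image (by fun_prop))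
    (hBcpt.image (by fun_prop)) hAv hBv]
  simp_rw [costFn_image_isometry_add R p hAne hAcpt, suppFn_image_isometry_add S d hBne hBcpt,
    inner_sub_right]
  constructor
  · rintro ⟨c, hc, hγ⟩
    refine ⟨c, _, _, hc, (le_costFn_convexHull_iUnion_iff hA hAc).1 le_rfl,
      (suppFn_convexHull_iUnion_le_iff hB hBc).1 le_rfl, by linarith⟩
  · rintro ⟨c, α, β, hc, hα, hβ, hγ⟩
    have hα' := (le_costFn_convexHull_iUnion_iff hA hAc).2 hα
    have hβ' := (suppFn_convexHull_iUnion_le_iff hB hBc).2 hβ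
    exact ⟨c, hc, by linarith⟩

theorem sd_ge_iff_hull_certificate {n m k : ℕ} (hn : 0 < n) (hm : 0 < m) (hk : 0 < k)
    (A : Fin m → Set (EuclideanSpace ℝ (Fin n))) (B : Fin k → Set (EuclideanSpace ℝ (Fin n)))
    (hA : ∀ i, (A i).Nonempty) (hAc : ∀ i, IsCompact (A i)) (hAv : ∀ i, Convex ℝ (A i))
    (hB : ∀ j, (B j).Nonempty) (hBc : ∀ j, IsCompact (B j)) (hBv : ∀ j, Convex ℝ (B j))
    (R S : EuclideanSpace ℝ (Fin n) ≃ₗᵢ[ℝ] EuclideanSpace ℝ (Fin n)) (p d : EuclideanSpace ℝ (Fin n)) (γ : ℝ) :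
    sd ((fun x => R x + p) '' convexHull ℝ (⋃ i, A i))
       ((fun x => S x + d) '' convexHull ℝ (⋃ j, B j)) ≥ γ ↔
      ∃ (c : EuclideanSpace ℝ (Fin n)) (α β : ℝ), ‖c‖ = 1 ∧
        (∀ i, α ≤ costFn (A i) (R.symm c)) ∧
        (∀ j, β ≥ suppFn (B j) (S.symm c)) ∧
        γ ≤ α - β + ⟪c, p - d⟫ :=
  sd_ge_iff_hull_certificate_general hn hm hk A B hA hAc hB hBc R S p d γ
end

section
/- Sufficient condition for continuous (swept-volume) collision avoidance: let V₀, V₁, O₀, O₁ ⊆ ℝⁿ be nonempty compact convex sets, r, w ≥ 0, and suppose the swept sets satisfy SV_V ⊆ conv(V₀ ∪ V₁) ⊕ B_r and SV_O ⊆ conv(O₀ ∪ O₁) ⊕ B_w. If sd(conv(V₀ ∪ V₁), conv(O₀ ∪ O₁)) ≥ γ + r + w, then sd(SV_V, SV_O) ≥ γ. -/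
open scoped RealInnerProductSpace Pointwise

/-!
`sd C D` is the signed distance from the origin to the Minkowski difference `D - C`, and
`SVO - SVV` lies in the difference of the hulls thickened by `r + w`. The signed distance to a set
can only grow when the set shrinks, and it drops by at most `s` when a closed convex set is
thickened by `s`: a point outside a closed convex set is separated from it by the hyperplane
through its nearest point, and moving it a further `s` away from that hyperplane takes it out of
the thickening too.
-/

open Set Metric

theorem isCompact_convexJoin {E : Type*} [TopologicalSpace E] [AddCommGroup E] [Module ℝ E]
    [ContinuousAdd E] [ContinuousSMul ℝ E] {s t : Set E} (hs : IsCompact s) (ht : IsCompact t) :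
    IsCompact (convexJoin ℝ s t) := by
  have h : convexJoin ℝ s t =
      (fun p : E × E × ℝ => (1 - p.2.2) • p.1 + p.2.2 • p.2.1) '' (s ×ˢ t ×ˢ Icc 0 1) := by
    ext x
    simp only [mem_convexJoin, segment_eq_image, mem_image, mem_prod, Prod.exists]
    constructor
    · rintro ⟨a, ha, b, hb, θ, hθ, rfl⟩
      exact ⟨a, b, θ, ⟨ha, hb, hθ⟩, rfl⟩
    · rintro ⟨a, b, θ, ⟨ha, hb, hθ⟩, rfl⟩
      exact ⟨a, ha, b, hb, θ, hθ, rfl⟩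
  rw [h]
  exact (hs.prod (ht.prod isCompact_Icc)).image (by fun_prop)

theorem isCompact_convexHull_union {E : Type*} [TopologicalSpace E] [AddCommGroup E] [Module ℝ E]
    [ContinuousAdd E] [ContinuousSMul ℝ E] {s t : Set E} (hs : IsCompact s) (ht : IsCompact t)
    (hsv : Convex ℝ s) (htv : Convex ℝ t) (hs₀ : s.Nonempty) (ht₀ : t.Nonempty) :
    IsCompact (convexHull ℝ (s ∪ t)) := by
  rw [hsv.convexHull_union htv hs₀ ht₀]
  exact isCompact_convexJoin hs ht

open Classical in
noncomputable def signedInfDist {α : Type*} [PseudoMetricSpace α] (x : α) (K : Set α) : ℝ :=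
  if x ∈ K then -infDist x Kᶜ else infDist x K

section SignedInfDist

variable {α : Type*} [PseudoMetricSpace α] {x : α} {K : Set α}

theorem signedInfDist_of_mem (h : x ∈ K) : signedInfDist x K = -infDist x Kᶜ := if_pos h

theorem signedInfDist_of_notMem (h : x ∉ K) : signedInfDist x K = infDist x K := if_neg h

end SignedInfDist

theorem signedInfDist_le_of_subset {E : Type*} [NormedAddCommGroup E] [NormedSpace ℝ E]
    {x : E} {K L : Set E} (hK : Bornology.IsBounded K) (hL : L.Nonempty) (hLK : L ⊆ K) :
    signedInfDist x K ≤ signedInfDist x L := by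
  by_cases hxL : x ∈ L
  · rw [signedInfDist_of_mem (hLK hxL), signedInfDist_of_mem hxL, neg_le_neg_iff]
    rcases subsingleton_or_nontrivial E with hE | hE
    · have hLc : Lᶜ = ∅ := compl_empty_iff.mpr hL.eq_univ
      rw [hLc, infDist_empty]
      exact infDist_nonneg
    · have hKc : Kᶜ.Nonempty :=
        nonempty_compl.mpr fun hKu => NormedSpace.unbounded_univ ℝ E (hKu ▸ hK)
      exact infDist_le_infDist_of_subset (compl_subset_compl.mpr hLK) hKc
  · rw [signedInfDist_of_notMem hxL]
    by_cases hxK : x ∈ K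
    · rw [signedInfDist_of_mem hxK]
      linarith [infDist_nonneg (x := x) (s := Kᶜ), infDist_nonneg (x := x) (s := L)]
    · rw [signedInfDist_of_notMem hxK]
      exact infDist_le_infDist_of_subset hLK hL

theorem sub_le_infDist_add_closedBall {E : Type*} [SeminormedAddCommGroup E] {K : Set E}
    {s : ℝ} (hne : K.Nonempty) (hs : 0 ≤ s) (x : E) :
    infDist x K - s ≤ infDist x (K + closedBall 0 s) := by
  rw [le_infDist (hne.add (nonempty_closedBall.mpr hs))]
  rintro _ ⟨k, hk, u, hu, rfl⟩
  calc infDist x K - s ≤ dist x k - dist (k + u) k :=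
        sub_le_sub (infDist_le_dist_of_mem hk)
          (by rw [dist_self_add_left]; exact mem_closedBall_zero_iff.mp hu)
    _ ≤ dist x (k + u) := by linarith [dist_triangle x (k + u) k]

section Thickening

variable {E : Type*} [NormedAddCommGroup E] [InnerProductSpace ℝ E] {K : Set E} {s : ℝ}

theorem exists_norm_eq_one_infDist_le_inner (hne : K.Nonempty) (hc : IsComplete K)
    (hv : Convex ℝ K) {p : E} (hp : p ∉ K) :
    ∃ e : E, ‖e‖ = 1 ∧ ∀ k ∈ K, infDist p K ≤ ⟪e, k - p⟫ := by
  obtain ⟨k₀, hk₀, hmin⟩ := exists_norm_eq_iInf_of_complete_convex hne hc hv p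
  have hproj := (norm_eq_iInf_iff_real_inner_le_zero hv hk₀).mp hmin
  set v := k₀ - p
  have hv0 : v ≠ 0 := sub_ne_zero.mpr (ne_of_mem_of_not_mem hk₀ hp)
  have hdist : infDist p K ≤ ‖v‖ :=
    (infDist_le_dist_of_mem hk₀).trans_eq (by rw [dist_eq_norm, norm_sub_rev])
  refine ⟨‖v‖⁻¹ • v, norm_smul_inv_norm hv0, fun k hk => hdist.trans ?_⟩
  have hsplit : k - p = (k - k₀) + v := by simp only [v]; abel
  have hneg : ⟪p - k₀, k - k₀⟫ = -⟪v, k - k₀⟫ := by rw [← inner_neg_left, neg_sub]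
  rw [real_inner_smul_left, le_inv_mul_iff₀ (norm_pos_iff.mpr hv0), hsplit, inner_add_right,
    real_inner_self_eq_norm_mul_norm]
  linarith [hproj k hk]

theorem sub_smul_notMem_add_closedBall {e p : E} {d σ ρ : ℝ} (he : ‖e‖ = 1)
    (hK : ∀ k ∈ K, d ≤ ⟪e, k - p⟫) (h : ρ < d + σ) : p - σ • e ∉ K + closedBall 0 ρ := by
  rintro ⟨k, hk, u, hu, hku⟩
  have hku' : k - p = -(σ • e) - u := by
    simp only at hku
    rw [show p = k + u + σ • e by rw [hku]; abel]
    abel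
  have heu : -ρ ≤ ⟪e, u⟫ := by
    have := (abs_le.mp (abs_real_inner_le_norm e u)).1
    rw [he, one_mul] at this
    linarith [mem_closedBall_zero_iff.mp hu]
  have hk' := hK k hk
  rw [hku', inner_sub_right, inner_neg_right, real_inner_smul_right,
    real_inner_self_eq_norm_mul_norm, he] at hk'
  linarith

theorem infDist_compl_add_closedBall_le (hne : K.Nonempty) (hc : IsComplete K)
    (hv : Convex ℝ K) (hs : 0 ≤ s) (x : E) :
    infDist x (K + closedBall 0 s)ᶜ ≤ infDist x Kᶜ + s := by
  have hKs : K ⊆ K + closedBall 0 s := subset_add_left K (mem_closedBall_self hs)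
  rcases (Kᶜ).eq_empty_or_nonempty with hKc | hKc
  · have hKsc : (K + closedBall 0 s)ᶜ = ∅ := by
      rw [compl_empty_iff] at hKc ⊢
      exact eq_univ_of_univ_subset (hKc ▸ hKs)
    rw [hKc, hKsc, infDist_empty, zero_add]
    exact hs
  · rw [← sub_le_iff_le_add, le_infDist hKc]
    intro t ht
    obtain ⟨e, he, hsep⟩ := exists_norm_eq_one_infDist_le_inner hne hc hv ht
    have hpos : 0 < infDist t K := (hc.isClosed.notMem_iff_infDist_pos hne).mp ht
    have hout := sub_smul_notMem_add_closedBall he hsep (by linarith : s < infDist t K + s)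
    calc infDist x (K + closedBall 0 s)ᶜ - s ≤ dist x (t - s • e) - s :=
          sub_le_sub_right (infDist_le_dist_of_mem hout) s
      _ ≤ dist x t + dist t (t - s • e) - s := sub_le_sub_right (dist_triangle _ _ _) s
      _ = dist x t := by
        rw [dist_comm t, dist_self_sub_left, norm_smul, he, mul_one, Real.norm_of_nonneg hs]
        ring

theorem infDist_compl_add_closedBall_le_sub (hne : K.Nonempty) (hc : IsComplete K)
    (hv : Convex ℝ K) {x : E} (hxK : x ∉ K) (hx : x ∈ K + closedBall 0 s) :
    infDist x (K + closedBall 0 s)ᶜ ≤ s - infDist x K := by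
  obtain ⟨e, he, hsep⟩ := exists_norm_eq_one_infDist_le_inner hne hc hv hxK
  have hle : infDist x K ≤ s := by
    obtain ⟨k, hk, u, hu, rfl⟩ := hx
    calc infDist (k + u) K ≤ dist (k + u) k := infDist_le_dist_of_mem hk
      _ ≤ s := by rw [dist_self_add_left]; exact mem_closedBall_zero_iff.mp hu
  refine le_of_forall_gt_imp_ge_of_dense fun σ hσ => ?_
  calc infDist x (K + closedBall 0 s)ᶜ ≤ dist x (x - σ • e) :=
        infDist_le_dist_of_mem (sub_smul_notMem_add_closedBall he hsep (by linarith))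
    _ = σ := by
      rw [dist_comm, dist_self_sub_left, norm_smul, he, mul_one, Real.norm_of_nonneg (by linarith)]

theorem sub_le_signedInfDist_add_closedBall (hne : K.Nonempty) (hc : IsComplete K)
    (hv : Convex ℝ K) (hs : 0 ≤ s) (x : E) :
    signedInfDist x K - s ≤ signedInfDist x (K + closedBall 0 s) := by
  by_cases hxK : x ∈ K
  · rw [signedInfDist_of_mem hxK,
      signedInfDist_of_mem (subset_add_left K (mem_closedBall_self hs) hxK)]
    linarith [infDist_compl_add_closedBall_le hne hc hv hs x]
  by_cases hx : x ∈ K + closedBall 0 s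
  · rw [signedInfDist_of_notMem hxK, signedInfDist_of_mem hx]
    linarith [infDist_compl_add_closedBall_le_sub hne hc hv hxK hx]
  · rw [signedInfDist_of_notMem hxK, signedInfDist_of_notMem hx]
    exact sub_le_infDist_add_closedBall hne hs x

end Thickening

theorem disjoint_image_add_right_iff {G : Type*} [AddCommGroup G] {C D : Set G} {t : G} :
    Disjoint ((· + t) '' C) D ↔ t ∉ D - C := by
  rw [Set.disjoint_left, forall_mem_image]
  constructor
  · rintro hCD ⟨y, hy, x, hx, rfl⟩
    exact hCD hx (by rwa [add_sub_cancel])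
  · exact fun hCD x hx hxD => hCD ⟨x + t, hxD, x, hx, add_sub_cancel_left x t⟩

theorem sInf_norm_image_eq_infDist_zero {E : Type*} [SeminormedAddCommGroup E] (S : Set E) :
    sInf (norm '' S) = infDist 0 S := by
  rw [sInf_image', infDist_eq_iInf]
  simp only [dist_zero_left]

theorem sd_eq_signedInfDist_zero_sub {n : ℕ} (C D : Set (EuclideanSpace ℝ (Fin n))) :
    sd C D = signedInfDist 0 (D - C) := by
  have hdist : {r | ∃ x ∈ C, ∃ y ∈ D, r = ‖x - y‖} = norm '' (D - C) := by
    ext r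
    constructor
    · rintro ⟨x, hx, y, hy, rfl⟩
      exact ⟨y - x, ⟨y, hy, x, hx, rfl⟩, norm_sub_rev y x⟩
    · rintro ⟨_, ⟨y, hy, x, hx, rfl⟩, rfl⟩
      exact ⟨x, hx, y, hy, norm_sub_rev y x⟩
  have hpen : {r | ∃ t : EuclideanSpace ℝ (Fin n), ‖t‖ = r ∧ Disjoint ((· + t) '' C) D} =
      norm '' (D - C)ᶜ := by
    ext r
    simp only [mem_ofPred_eq, mem_image, mem_compl_iff, disjoint_image_add_right_iff, and_comm]
  rw [sd, hdist, hpen, sInf_norm_image_eq_infDist_zero, sInf_norm_image_eq_infDist_zero]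
  by_cases h : Disjoint C D
  · rw [if_pos h, signedInfDist_of_notMem (zero_mem_sub_iff.not_left.mpr h.symm)]
  · rw [if_neg h, signedInfDist_of_mem (zero_mem_sub_iff.mpr fun h' => h h'.symm)]

theorem swept_volume_sufficient_general {n : ℕ}
    (V₀ V₁ O₀ O₁ SVV SVO : Set (EuclideanSpace ℝ (Fin n)))
    (hV₀ : V₀.Nonempty) (hV₁ : V₁.Nonempty) (hO₀ : O₀.Nonempty) (hO₁ : O₁.Nonempty)
    (hV₀c : IsCompact V₀) (hV₁c : IsCompact V₁) (hO₀c : IsCompact O₀) (hO₁c : IsCompact O₁)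
    (hV₀v : Convex ℝ V₀) (hV₁v : Convex ℝ V₁) (hO₀v : Convex ℝ O₀) (hO₁v : Convex ℝ O₁)
    (hSVV : SVV.Nonempty) (hSVO : SVO.Nonempty)
    (r w γ : ℝ) (hr : 0 ≤ r) (hw : 0 ≤ w)
    (hsubV : SVV ⊆ convexHull ℝ (V₀ ∪ V₁) + Metric.closedBall (0 : EuclideanSpace ℝ (Fin n)) r)
    (hsubO : SVO ⊆ convexHull ℝ (O₀ ∪ O₁) + Metric.closedBall (0 : EuclideanSpace ℝ (Fin n)) w)
    (h : sd (convexHull ℝ (V₀ ∪ V₁)) (convexHull ℝ (O₀ ∪ O₁)) ≥ γ + r + w) :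
    sd SVV SVO ≥ γ := by
  set K := convexHull ℝ (O₀ ∪ O₁) - convexHull ℝ (V₀ ∪ V₁) with hK
  have hKc : IsCompact K := by
    rw [hK, sub_eq_add_neg]
    exact (isCompact_convexHull_union hO₀c hO₁c hO₀v hO₁v hO₀ hO₁).add
      (isCompact_convexHull_union hV₀c hV₁c hV₀v hV₁v hV₀ hV₁).neg
  have hKne : K.Nonempty :=
    (hO₀.mono subset_union_left).convexHull.sub (hV₀.mono subset_union_left).convexHull
  have hsub : SVO - SVV ⊆ K + closedBall 0 (w + r) := by
    rw [← sub_zero (0 : EuclideanSpace ℝ (Fin n)), ← closedBall_sub_closedBall hw hr,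
      ← add_sub_add_comm]
    exact sub_subset_sub hsubO hsubV
  calc γ ≤ signedInfDist 0 K - (w + r) := by rw [← sd_eq_signedInfDist_zero_sub]; linarith
    _ ≤ signedInfDist 0 (K + closedBall 0 (w + r)) :=
      sub_le_signedInfDist_add_closedBall hKne hKc.isComplete
        ((convex_convexHull ℝ _).sub (convex_convexHull ℝ _)) (add_nonneg hw hr) 0
    _ ≤ signedInfDist 0 (SVO - SVV) :=
      signedInfDist_le_of_subset (hKc.add (isCompact_closedBall 0 _)).isBounded
        (hSVO.sub hSVV) hsub
    _ = sd SVV SVO := (sd_eq_signedInfDist_zero_sub SVV SVO).symm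

theorem swept_volume_sufficient {n : ℕ}
    (V₀ V₁ O₀ O₁ SVV SVO : Set (EuclideanSpace ℝ (Fin n)))
    (hV₀ : V₀.Nonempty) (hV₁ : V₁.Nonempty) (hO₀ : O₀.Nonempty) (hO₁ : O₁.Nonempty)
    (hV₀c : IsCompact V₀) (hV₁c : IsCompact V₁) (hO₀c : IsCompact O₀) (hO₁c : IsCompact O₁)
    (hV₀v : Convex ℝ V₀) (hV₁v : Convex ℝ V₁) (hO₀v : Convex ℝ O₀) (hO₁v : Convex ℝ O₁)
    (hSVV : SVV.Nonempty) (hSVO : SVO.Nonempty)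
    (hSVVb : Bornology.IsBounded SVV) (hSVOb : Bornology.IsBounded SVO)
    (r w γ : ℝ) (hr : 0 ≤ r) (hw : 0 ≤ w)
    (hsubV : SVV ⊆ convexHull ℝ (V₀ ∪ V₁) + Metric.closedBall (0 : EuclideanSpace ℝ (Fin n)) r)
    (hsubO : SVO ⊆ convexHull ℝ (O₀ ∪ O₁) + Metric.closedBall (0 : EuclideanSpace ℝ (Fin n)) w)
    (h : sd (convexHull ℝ (V₀ ∪ V₁)) (convexHull ℝ (O₀ ∪ O₁)) ≥ γ + r + w) :
    sd SVV SVO ≥ γ :=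
  swept_volume_sufficient_general V₀ V₁ O₀ O₁ SVV SVO hV₀ hV₁ hO₀ hO₁ hV₀c hV₁c hO₀c hO₁c hV₀v hV₁v
    hO₀v hO₁v hSVV hSVO r w γ hr hw hsubV hsubO h
end
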